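/- Let n₀, ..., n_s ∈ ℕ and suppose there exist k ∈ ℕ, m₀, ..., m_s < F_k, and t₀, ..., t_s with v(t_i, k + 2r) = 0 and n_i = m_i + t_i for each i, where r is the smallest integer with s + 1 < F_r. Then for all ℓ: δ_ℓ(n₀ + ... + n_s) = δ_ℓ(m₀ + ... + m_s) + δ_ℓ(t₀ + ... + t_s). -/

import Mathlib

/-!
The Zeckendorf representations of `∑ mᵢ` and `∑ tᵢ` occupy index ranges separated by a gap,
so together they form a representation of `∑ nᵢ`, which by uniqueness is the Zeckendorf one.
Since `∑ mᵢ < (s + 1) F_k ≤ F_r F_k ≤ F_(k+r-1)`, the digits of `∑ mᵢ` lie below `k + r - 1`.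
For `∑ tᵢ` one uses the golden ratio and `φ F_j = F_(j+1) - ψ^j`: if the digits of `x` start
at index `B`, then `φ x` lies within `|ψ|^B φ` of an integer, and if its lowest digit is
exactly `B`, then `φ x` is at distance at least `|ψ|^(B+1)` from every integer. Adding fewer
than `F_r ≤ φ^(r-1)` numbers whose digits start at `k + 2r` keeps `φ (∑ tᵢ)` within
`|ψ|^(k+r)` of an integer, so the digits of `∑ tᵢ` start at `k + r` or later.
-/

/-- A valid Zeckendorf representation of `n`: digits in `{0,1}`, digits below index 2 vanish,
no two consecutive ones, finite support, and the weighted sum equals `n`. -/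
def IsZeckRep (n : ℕ) (δ : ℕ → ℕ) : Prop :=
  (∀ k, δ k ≤ 1) ∧ (∀ k < 2, δ k = 0) ∧ (∀ k, δ (k + 1) = 1 → δ k = 0) ∧
    ∃ L, (∀ k, L < k → δ k = 0) ∧ n = ∑ k ∈ Finset.range (L + 1), δ k * Nat.fib k

open Classical in
noncomputable def zeckDigit (n k : ℕ) : ℕ :=
  if h : ∃ δ : ℕ → ℕ, IsZeckRep n δ then h.choose k else 0

noncomputable def phi : ℝ := (1 + Real.sqrt 5) / 2

open Finset

def IsZeckDigits (δ : ℕ → ℕ) : Prop :=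
  (∀ k, δ k ≤ 1) ∧ (∀ k < 2, δ k = 0) ∧ ∀ k, δ (k + 1) = 1 → δ k = 0

namespace IsZeckDigits

variable {δ ε : ℕ → ℕ}

theorem sum_range_lt_fib (hδ : IsZeckDigits δ) (B : ℕ) :
    ∑ j ∈ range (B + 1), δ j * Nat.fib j < Nat.fib (B + 1) := by
  obtain ⟨hle, hlow, hcons⟩ := hδ
  induction B using Nat.strong_induction_on with
  | _ B ih =>
    match B with
    | 0 => simp
    | 1 => simp [sum_range_succ, hlow 1 (by omega)]
    | B + 2 =>
      rcases Nat.le_one_iff_eq_zero_or_eq_one.1 (hle (B + 2)) with htop | htop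
      · rw [sum_range_succ, htop, zero_mul, add_zero]
        exact (ih (B + 1) (by omega)).trans_le Nat.fib_le_fib_succ
      · have hprev := ih B (by omega)
        have hfib : Nat.fib (B + 2 + 1) = Nat.fib (B + 1) + Nat.fib (B + 2) := Nat.fib_add_two
        rw [sum_range_succ, sum_range_succ, htop, hcons _ htop, hfib]
        omega

theorem eq_of_sum_range_eq (hδ : IsZeckDigits δ) (hε : IsZeckDigits ε) :
    ∀ L, ∑ j ∈ range L, δ j * Nat.fib j = ∑ j ∈ range L, ε j * Nat.fib j →
      ∀ j < L, δ j = ε j := by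
  intro L
  induction L with
  | zero => simp
  | succ L ih =>
    intro hsum
    have htop : δ L = ε L := by
      cases L with
      | zero => rw [hδ.2.1 0 (by omega), hε.2.1 0 (by omega)]
      | succ B =>
        have hδB := hδ.sum_range_lt_fib B
        have hεB := hε.sum_range_lt_fib B
        rw [sum_range_succ, sum_range_succ (fun j => ε j * _)] at hsum
        rcases Nat.le_one_iff_eq_zero_or_eq_one.1 (hδ.1 (B + 1)) with h | h <;>
          rcases Nat.le_one_iff_eq_zero_or_eq_one.1 (hε.1 (B + 1)) with h' | h' <;>
          simp only [h, h'] at hsum ⊢ <;> omega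
    rw [sum_range_succ, sum_range_succ, htop, Nat.add_right_cancel_iff] at hsum
    intro j hj
    rcases Nat.lt_succ_iff_lt_or_eq.1 hj with hj | rfl
    exacts [ih hsum j hj, htop]

end IsZeckDigits

namespace IsZeckRep

variable {n a b : ℕ} {δ ε : ℕ → ℕ}

theorem isZeckDigits (h : IsZeckRep n δ) : IsZeckDigits δ := ⟨h.1, h.2.1, h.2.2.1⟩

theorem exists_eq_zero_of_le (h : IsZeckRep n δ) : ∃ U, ∀ j, U ≤ j → δ j = 0 := by
  obtain ⟨-, -, -, L, hL, -⟩ := h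
  exact ⟨L + 1, fun j hj => hL j hj⟩

theorem eq_sum_range (h : IsZeckRep n δ) {U : ℕ} (hU : ∀ j, U ≤ j → δ j = 0) :
    n = ∑ j ∈ range U, δ j * Nat.fib j := by
  obtain ⟨-, -, -, L, hL, hn⟩ := h
  rw [hn, ← eventually_constant_sum (fun j hj => by simp [hL j hj]) (le_max_left (L + 1) U),
    eventually_constant_sum (fun j hj => by simp [hU j hj]) (le_max_right (L + 1) U)]

theorem of_eq_sum_range (hδ : IsZeckDigits δ) {U : ℕ} (hU : ∀ j, U ≤ j → δ j = 0)
    (hn : n = ∑ j ∈ range U, δ j * Nat.fib j) : IsZeckRep n δ := by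
  obtain ⟨hle, hlow, hcons⟩ := hδ
  refine ⟨hle, hlow, hcons, U, fun j hj => hU j hj.le, ?_⟩
  rw [hn, eventually_constant_sum (fun j hj => by simp [hU j hj]) (Nat.le_succ U)]

theorem fib_le (h : IsZeckRep n δ) {j : ℕ} (hj : δ j ≠ 0) : Nat.fib j ≤ n := by
  obtain ⟨U, hU⟩ := h.exists_eq_zero_of_le
  have hjU : j < U := by by_contra! hUj; exact hj (hU j hUj)
  have hδj : δ j = 1 := by have := h.1 j; omega
  rw [h.eq_sum_range hU]
  simpa [hδj] using single_le_sum (f := fun i => δ i * Nat.fib i) (by simp) (mem_range.2 hjU)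

theorem eq_zero_of_lt_fib (h : IsZeckRep n δ) {B : ℕ} (hn : n < Nat.fib B) {j : ℕ}
    (hj : B ≤ j) : δ j = 0 := by
  by_contra hδj
  exact (hn.trans_le (Nat.fib_mono hj)).not_ge (h.fib_le hδj)

theorem eq_zero_of_sum_Ico_eq_zero (h : IsZeckRep n δ) {B : ℕ}
    (hs : ∑ j ∈ Ico 2 B, δ j * Nat.fib j = 0) : ∀ j < B, δ j = 0 := by
  intro j hj
  by_cases hj2 : j < 2
  · exact h.2.1 j hj2
  · have := sum_eq_zero_iff.1 hs j (mem_Ico.2 ⟨by omega, hj⟩)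
    simpa [Nat.fib_pos.2 (show 0 < j by omega) |>.ne'] using this

theorem unique (h : IsZeckRep n δ) (h' : IsZeckRep n ε) : δ = ε := by
  obtain ⟨U, hU⟩ := h.exists_eq_zero_of_le
  obtain ⟨U', hU'⟩ := h'.exists_eq_zero_of_le
  funext j
  refine h.isZeckDigits.eq_of_sum_range_eq h'.isZeckDigits (U + U' + j + 1) ?_ j (by omega)
  rw [← h.eq_sum_range (fun i hi => hU i (by omega)),
    ← h'.eq_sum_range (fun i hi => hU' i (by omega))]

theorem add (hδ : IsZeckRep a δ) (hε : IsZeckRep b ε) {g : ℕ} (hδg : ∀ j, g ≤ j → δ j = 0)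
    (hεg : ∀ j ≤ g, ε j = 0) : IsZeckRep (a + b) (δ + ε) := by
  obtain ⟨U, hU⟩ := hδ.exists_eq_zero_of_le
  obtain ⟨U', hU'⟩ := hε.exists_eq_zero_of_le
  obtain ⟨hle, hlow, hcons⟩ := hδ.isZeckDigits
  obtain ⟨hle', hlow', hcons'⟩ := hε.isZeckDigits
  refine of_eq_sum_range ⟨fun j => ?_, fun j hj => ?_, fun j hj => ?_⟩ (U := U + U')
    (fun j hj => by simp [hU j (by omega), hU' j (by omega)]) ?_
  · rcases le_or_gt g j with hj | hj
    · simpa [hδg j hj] using hle' j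
    · simpa [hεg j hj.le] using hle j
  · simp [hlow j hj, hlow' j hj]
  · simp only [Pi.add_apply] at hj ⊢
    rcases le_or_gt g j with hgj | hjg
    · rw [hδg (j + 1) (by omega)] at hj
      rw [hδg j hgj, hcons' j (by omega)]
    · rw [hεg (j + 1) hjg] at hj
      rw [hεg j hjg.le, hcons j (by omega)]
  · simp only [Pi.add_apply, add_mul, sum_add_distrib]
    rw [← hδ.eq_sum_range (fun i hi => hU i (by omega)),
      ← hε.eq_sum_range (fun i hi => hU' i (by omega))]

end IsZeckRep

theorem isZeckRep_fib_single {g : ℕ} (hg : 2 ≤ g) : IsZeckRep (Nat.fib g) (Pi.single g 1) := by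
  refine IsZeckRep.of_eq_sum_range ⟨fun j => ?_, fun j hj => ?_, fun j hj => ?_⟩ (U := g + 1)
    (fun j hj => by simp [show j ≠ g by omega]) ?_
  · by_cases hj : j = g <;> simp [hj]
  · simp [show j ≠ g by omega]
  · have : j + 1 = g := by by_contra hne; simp [hne] at hj
    simp [show j ≠ g by omega]
  · rw [sum_eq_single_of_mem g (mem_range.2 (by omega)) (fun j _ hj => by simp [hj])]
    simp

theorem exists_isZeckRep (n : ℕ) : ∃ δ, IsZeckRep n δ := by
  induction n using Nat.strong_induction_on with
  | _ n ih =>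
    rcases Nat.eq_zero_or_pos n with rfl | hn
    · exact ⟨0, IsZeckRep.of_eq_sum_range ⟨by simp, by simp, by simp⟩ (U := 0) (by simp)
        (by simp)⟩
    set g := Nat.greatestFib n
    have hg : 2 ≤ g := Nat.le_greatestFib.2 (by rw [Nat.fib_two]; omega)
    have hfg : Nat.fib g ≤ n := Nat.fib_greatestFib_le n
    have hrest : n - Nat.fib g < Nat.fib (g - 1) := by
      have : n < Nat.fib (g + 1) := Nat.lt_fib_greatestFib_add_one n
      rw [Nat.fib_add_one (by omega)] at this
      omega
    obtain ⟨δ, hδ⟩ := ih (n - Nat.fib g) (by have := Nat.fib_pos.2 (by omega : 0 < g); omega)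
    refine ⟨δ + Pi.single g 1, ?_⟩
    have := hδ.add (isZeckRep_fib_single hg) (g := g - 1)
      (fun j hj => hδ.eq_zero_of_lt_fib hrest hj) (fun j hj => by simp [show j ≠ g by omega])
    rwa [Nat.sub_add_cancel hfg] at this

theorem isZeckRep_zeckDigit (n : ℕ) : IsZeckRep n (zeckDigit n) := by
  have h := exists_isZeckRep n
  unfold zeckDigit
  simp only [dif_pos h]
  exact h.choose_spec

theorem IsZeckRep.zeckDigit_eq {n : ℕ} {δ : ℕ → ℕ} (h : IsZeckRep n δ) : zeckDigit n = δ :=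
  (isZeckRep_zeckDigit n).unique h

open Real
open scoped goldenRatio

theorem abs_goldenConj : |ψ| = -ψ := abs_of_neg goldenConj_neg

theorem abs_goldenConj_mul_goldenRatio : |ψ| * φ = 1 := by
  rw [abs_goldenConj, neg_mul, goldenConj_mul_goldenRatio, neg_neg]

theorem fib_add_one_le_goldenRatio_pow (n : ℕ) : (Nat.fib (n + 1) : ℝ) ≤ φ ^ n := by
  have h := goldenRatio_mul_fib_succ_add_fib n
  rw [pow_succ'] at h
  exact le_of_mul_le_mul_left (by linarith [Nat.cast_nonneg (α := ℝ) (Nat.fib n)]) goldenRatio_pos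

theorem natCast_mul_abs_goldenConj_pow_lt {c B r : ℕ} (hc : c < Nat.fib r) :
    c * (|ψ| ^ (B + r) * φ) < |ψ| ^ B := by
  obtain ⟨r, rfl⟩ := Nat.exists_eq_add_one_of_ne_zero (show r ≠ 0 by rintro rfl; simp at hc)
  have hcφ : (c : ℝ) < φ ^ r := (Nat.cast_lt.2 hc).trans_le (fib_add_one_le_goldenRatio_pow r)
  have hψ : 0 < |ψ| := abs_pos.2 goldenConj_ne_zero
  calc (c : ℝ) * (|ψ| ^ (B + (r + 1)) * φ) = c * |ψ| ^ r * |ψ| ^ B * (|ψ| * φ) := by ring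
    _ < φ ^ r * |ψ| ^ r * |ψ| ^ B * (|ψ| * φ) := by gcongr
    _ = |ψ| ^ B := by rw [← mul_pow, mul_comm φ, abs_goldenConj_mul_goldenRatio, one_pow]; ring

/-- The interval `[-1, φ]` is stable under `x ↦ e + ψ x` for `e ∈ {0, 1}`. -/
theorem sum_mul_goldenConj_pow_mem_Icc {ε : ℕ → ℕ} (hε : ∀ i, ε i ≤ 1) (d : ℕ) :
    ∑ i ∈ range d, (ε i : ℝ) * ψ ^ i ∈ Set.Icc (-1) φ := by
  induction d generalizing ε with
  | zero => simp [goldenRatio_pos.le]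
  | succ d ih =>
    obtain ⟨hlo, hhi⟩ := ih (fun i => hε (i + 1))
    have h0 : (ε 0 : ℝ) ≤ 1 := by exact_mod_cast hε 0
    have hsum : ∑ i ∈ range (d + 1), (ε i : ℝ) * ψ ^ i
        = ψ * ∑ i ∈ range d, (ε (i + 1) : ℝ) * ψ ^ i + ε 0 := by
      rw [sum_range_succ', mul_sum, pow_zero, mul_one]
      exact congrArg (· + _) (sum_congr rfl fun i _ => by ring)
    rw [hsum, Set.mem_Icc]
    have hψ := goldenConj_neg
    have hφψ := goldenRatio_mul_goldenConj
    have hφ : φ = 1 - ψ := by linarith [goldenRatio_add_goldenConj]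
    constructor <;> nlinarith [Nat.cast_nonneg (α := ℝ) (ε 0)]

theorem neg_goldenConj_le_sum_mul_goldenConj_pow {ε : ℕ → ℕ} (hε : ∀ i, ε i ≤ 1)
    (h0 : ε 0 = 1) (h1 : ε 1 = 0) (d : ℕ) :
    -ψ ≤ ∑ i ∈ range (d + 2), (ε i : ℝ) * ψ ^ i := by
  have hsum : ∑ i ∈ range (d + 2), (ε i : ℝ) * ψ ^ i
      = ψ ^ 2 * ∑ i ∈ range d, (ε (i + 2) : ℝ) * ψ ^ i + 1 := by
    rw [sum_range_succ', sum_range_succ', h0, h1, mul_sum]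
    simp only [Nat.cast_one, Nat.cast_zero, zero_mul, add_zero, pow_zero, mul_one]
    exact congrArg (· + _) (sum_congr rfl fun i _ => by ring)
  have hlo := (sum_mul_goldenConj_pow_mem_Icc (fun i => hε (i + 2)) d).1
  rw [hsum]
  nlinarith [goldenConj_sq, sq_nonneg ψ]

namespace IsZeckRep

variable {n B : ℕ} {δ : ℕ → ℕ}

theorem exists_natCast_sub_goldenRatio_mul_eq (h : IsZeckRep n δ) (hB : ∀ j < B, δ j = 0) :
    ∃ D, ∀ d, D ≤ d →
      ∃ z : ℕ, (z : ℝ) - φ * n = ψ ^ B * ∑ i ∈ range d, (δ (B + i) : ℝ) * ψ ^ i := by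
  obtain ⟨U, hU⟩ := h.exists_eq_zero_of_le
  refine ⟨U, fun d hd => ⟨∑ j ∈ range (B + d), δ j * Nat.fib (j + 1), ?_⟩⟩
  rw [h.eq_sum_range (U := B + d) (fun j hj => hU j (by omega))]
  push_cast
  rw [mul_sum, ← sum_sub_distrib, sum_range_add, mul_sum]
  have hlow : ∑ j ∈ range B, ((δ j : ℝ) * Nat.fib (j + 1) - φ * (δ j * Nat.fib j)) = 0 :=
    sum_eq_zero fun j hj => by simp [hB j (mem_range.1 hj)]
  rw [hlow, zero_add]
  refine sum_congr rfl fun i _ => ?_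
  have := fib_succ_sub_goldenRatio_mul_fib (B + i)
  rw [pow_add] at this
  linear_combination (δ (B + i) : ℝ) * this

theorem exists_abs_goldenRatio_mul_sub_le (h : IsZeckRep n δ) (hB : ∀ j < B, δ j = 0) :
    ∃ z : ℤ, |φ * n - z| ≤ |ψ| ^ B * φ := by
  obtain ⟨D, hD⟩ := h.exists_natCast_sub_goldenRatio_mul_eq hB
  obtain ⟨z, hz⟩ := hD D le_rfl
  obtain ⟨hlo, hhi⟩ := sum_mul_goldenConj_pow_mem_Icc (fun i => h.1 (B + i)) D
  refine ⟨z, ?_⟩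
  rw [Int.cast_natCast, abs_sub_comm, hz, abs_mul, abs_pow]
  gcongr
  exact abs_le.2 ⟨by linarith [one_lt_goldenRatio], hhi⟩

theorem abs_goldenConj_pow_succ_le (h : IsZeckRep n δ) (hB : ∀ j < B, δ j = 0) (hδB : δ B = 1)
    (z : ℤ) : |ψ| ^ (B + 1) ≤ |φ * n - z| := by
  have hB2 : 2 ≤ B := by by_contra! hB2; simp [h.2.1 B hB2] at hδB
  have hψ : 0 < |ψ| := abs_pos.2 goldenConj_ne_zero
  have hψ1 : |ψ| < 1 := by rw [abs_goldenConj]; linarith [neg_one_lt_goldenConj]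
  obtain ⟨D, hD⟩ := h.exists_natCast_sub_goldenRatio_mul_eq hB
  obtain ⟨z₀, hz₀⟩ := hD (D + 2) (by omega)
  have hδB1 : δ (B + 1) = 0 := by
    have := h.1 (B + 1)
    have := mt (h.2.2.1 B) (by omega)
    omega
  have hlo := neg_goldenConj_le_sum_mul_goldenConj_pow (fun i => h.1 (B + i)) hδB hδB1 D
  have hhi := (sum_mul_goldenConj_pow_mem_Icc (fun i => h.1 (B + i)) (D + 2)).2
  rw [← abs_goldenConj] at hlo
  have hdist : |φ * n - z₀| = |ψ| ^ B * ∑ i ∈ range (D + 2), (δ (B + i) : ℝ) * ψ ^ i := by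
    rw [abs_sub_comm, hz₀, abs_mul, abs_pow, abs_of_pos (hψ.trans_le hlo)]
  rcases eq_or_ne z z₀ with rfl | hz
  · rw [Int.cast_natCast, hdist, pow_succ]
    gcongr
  · -- `z₀` is the integer nearest to `φ * n`, at distance at most `|ψ|`
    have hone : (1 : ℝ) ≤ |(z : ℝ) - z₀| := by
      rw [← Int.cast_natCast, ← Int.cast_sub, ← Int.cast_abs]
      exact_mod_cast Int.one_le_abs (sub_ne_zero.2 hz)
    have hnear : |φ * n - z₀| ≤ |ψ| := by
      calc |φ * n - z₀| ≤ |ψ| ^ B * φ := by rw [hdist]; gcongr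
        _ ≤ |ψ| ^ 2 * φ := by
          gcongr ?_ * φ
          exact pow_le_pow_of_le_one hψ.le hψ1.le (by omega)
        _ = |ψ| := by rw [sq, mul_assoc, abs_goldenConj_mul_goldenRatio, mul_one]
    have hsq : |ψ| ^ (B + 1) ≤ |ψ| ^ 2 := pow_le_pow_of_le_one hψ.le hψ1.le (by omega)
    have h1ψ : 1 - |ψ| = |ψ| ^ 2 := by
      rw [abs_goldenConj, neg_sq, goldenConj_sq]; ring
    have := abs_sub_abs_le_abs_sub ((z : ℝ) - z₀) (φ * n - z₀)
    rw [show (z : ℝ) - z₀ - (φ * n - z₀) = z - φ * n by ring,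
      abs_sub_comm (z : ℝ) (φ * n)] at this
    linarith

end IsZeckRep

theorem zeckDigit_eq_zero_of_abs_sub_lt {n B : ℕ} {z : ℤ} (h : |φ * n - z| < |ψ| ^ B) :
    ∀ j < B, zeckDigit n j = 0 := by
  by_contra! hex
  have hrep := isZeckRep_zeckDigit n
  have hmin := Nat.find_spec hex
  have hbelow : ∀ j < Nat.find hex, zeckDigit n j = 0 := fun j hj => by
    by_contra hj0
    exact Nat.find_min hex hj ⟨hj.trans hmin.1, hj0⟩
  have hone : zeckDigit n (Nat.find hex) = 1 := by have := hrep.1 (Nat.find hex); omega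
  have hψ1 : |ψ| ≤ 1 := by rw [abs_goldenConj]; linarith [neg_one_lt_goldenConj]
  have : |ψ| ^ B ≤ |ψ| ^ (Nat.find hex + 1) :=
    pow_le_pow_of_le_one (abs_nonneg ψ) hψ1 hmin.1
  linarith [hrep.abs_goldenConj_pow_succ_le hbelow hone z]

theorem zeckDigit_sum_eq_zero {ι : Type*} (S : Finset ι) (f : ι → ℕ) {B r : ℕ}
    (hS : #S < Nat.fib r) (hf : ∀ i ∈ S, ∀ j < B + r, zeckDigit (f i) j = 0) :
    ∀ j < B, zeckDigit (∑ i ∈ S, f i) j = 0 := by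
  have hz : ∀ i, ∃ z : ℤ, i ∈ S → |φ * f i - z| ≤ |ψ| ^ (B + r) * φ := fun i => by
    by_cases hi : i ∈ S
    · obtain ⟨z, hz⟩ := (isZeckRep_zeckDigit (f i)).exists_abs_goldenRatio_mul_sub_le (hf i hi)
      exact ⟨z, fun _ => hz⟩
    · exact ⟨0, fun h => absurd h hi⟩
  choose z hz using hz
  refine zeckDigit_eq_zero_of_abs_sub_lt (z := ∑ i ∈ S, z i) ?_
  calc |φ * ↑(∑ i ∈ S, f i) - ↑(∑ i ∈ S, z i)| = |∑ i ∈ S, (φ * f i - z i)| := by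
        push_cast
        rw [mul_sum, sum_sub_distrib]
    _ ≤ ∑ i ∈ S, |φ * f i - z i| := abs_sum_le_sum_abs _ _
    _ ≤ #S * (|ψ| ^ (B + r) * φ) := by
        simpa using sum_le_sum fun i hi => hz i hi
    _ < |ψ| ^ B := natCast_mul_abs_goldenConj_pow_lt hS

theorem fib_add_one_mul_fib_add_one_le (a b : ℕ) :
    Nat.fib (a + 1) * Nat.fib (b + 1) ≤ Nat.fib (a + b + 1) := by
  rw [Nat.fib_add]
  exact Nat.le_add_left _ _

theorem zeck_digit_sum_separated_general (s k r : ℕ) (n m t : Fin (s + 1) → ℕ)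
    (hr₁ : s + 1 < Nat.fib r)
    (hm : ∀ i, m i < Nat.fib k)
    (ht : ∀ i, ∑ j ∈ Finset.Ico 2 (k + 2 * r), zeckDigit (t i) j * Nat.fib j = 0)
    (hn : ∀ i, n i = m i + t i) :
    ∀ ℓ : ℕ, zeckDigit (∑ i, n i) ℓ = zeckDigit (∑ i, m i) ℓ + zeckDigit (∑ i, t i) ℓ := by
  obtain ⟨k, rfl⟩ :=
    Nat.exists_eq_add_one_of_ne_zero (show k ≠ 0 by rintro rfl; simpa using hm 0)
  obtain ⟨r, rfl⟩ := Nat.exists_eq_add_one_of_ne_zero (show r ≠ 0 by rintro rfl; simp at hr₁)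
  have hT : ∀ j < k + 1 + (r + 1), zeckDigit (∑ i, t i) j = 0 :=
    zeckDigit_sum_eq_zero _ _ (by simpa using hr₁) fun i _ j hj =>
      (isZeckRep_zeckDigit (t i)).eq_zero_of_sum_Ico_eq_zero (ht i) j (by omega)
  have hM : ∑ i, m i < Nat.fib (k + r + 1) :=
    calc ∑ i, m i < ∑ _i : Fin (s + 1), Nat.fib (k + 1) :=
          sum_lt_sum_of_nonempty univ_nonempty fun i _ => hm i
      _ = (s + 1) * Nat.fib (k + 1) := by simp
      _ ≤ Nat.fib (r + 1) * Nat.fib (k + 1) := by gcongr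
      _ ≤ Nat.fib (k + r + 1) := by
          rw [mul_comm]; exact fib_add_one_mul_fib_add_one_le k r
  have hsep := (isZeckRep_zeckDigit (∑ i, m i)).add (isZeckRep_zeckDigit (∑ i, t i))
    (fun j hj => (isZeckRep_zeckDigit _).eq_zero_of_lt_fib hM hj) fun j hj => hT j (by omega)
  intro ℓ
  rw [show ∑ i, n i = ∑ i, m i + ∑ i, t i by simp [hn, sum_add_distrib], hsep.zeckDigit_eq]
  rfl

/-- If each `n i` splits as `m i + t i` where `m i < F k` and the Zeckendorf digits of
`t i` below index `k + 2r` vanish (with `r` the smallest integer with `s + 1 < F r`),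
then the Zeckendorf digits of the sum split accordingly:
`δ ℓ (n₀ + ⋯ + n_s) = δ ℓ (m₀ + ⋯ + m_s) + δ ℓ (t₀ + ⋯ + t_s)` for all `ℓ`. -/
theorem zeck_digit_sum_separated (s k r : ℕ) (n m t : Fin (s + 1) → ℕ)
    (hr₁ : s + 1 < Nat.fib r) (hr₂ : ∀ r' : ℕ, s + 1 < Nat.fib r' → r ≤ r')
    (hm : ∀ i, m i < Nat.fib k)
    (ht : ∀ i, ∑ j ∈ Finset.Ico 2 (k + 2 * r), zeckDigit (t i) j * Nat.fib j = 0)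
    (hn : ∀ i, n i = m i + t i) :
    ∀ ℓ : ℕ, zeckDigit (∑ i, n i) ℓ = zeckDigit (∑ i, m i) ℓ + zeckDigit (∑ i, t i) ℓ :=
  zeck_digit_sum_separated_general s k r n m t hr₁ hm ht hn
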